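/- arXiv:1607.04748 — 6 statements merged into one kernel-verified Lean document; each statement's English description precedes it below -/
import Mathlib

section
/- The canonical dual function P^d is concave on the set S⁺♯; that is, P^d(ς,σ₁,σ₂) = −½ cᵀ G(ς,σ₁)⁻¹ c − ¼ Σᵢ (fᵢ+σ₁ᵢ+σ₂ᵢ)²/σ₂ᵢ − ½ ς² − α ς, viewed as a function of (ς,σ₁,σ₂) ∈ ℝ×ℝⁿ×ℝⁿ, is concave on S⁺♯. -/
/-!
Both `M ↦ cᵀ M⁻¹ c` on positive definite matrices and `(x, y) ↦ x² / y` on `y > 0` are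
pointwise maxima of affine functions, attained at `x = M⁻¹ c` resp. `z = x / y`:
`cᵀ M⁻¹ c = max_x (2 cᵀx - xᵀ M x)` and `x² / y = max_z (2 x z - y z²)`. Hence both are convex.
Since `G(ς, σ₁)` and `(fᵢ + σ₁ᵢ + σ₂ᵢ, σ₂ᵢ)` are affine in `(ς, σ₁, σ₂)`, `-P^d` is a nonnegative
combination of convex functions plus the convex `½ ς² + α ς`, on the convex set `S⁺♯`.
-/

open Matrix BigOperators

/-- `G(ς,σ₁) = A + ς B + 2 diag(σ₁)`. -/
noncomputable def Gm {n : ℕ} (A B : Matrix (Fin n) (Fin n) ℝ) (ς : ℝ) (σ₁ : Fin n → ℝ) :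
    Matrix (Fin n) (Fin n) ℝ :=
  A + ς • B + (2 : ℝ) • Matrix.diagonal σ₁

/-- The canonical dual function `P^d(ς,σ₁,σ₂)`. -/
noncomputable def Pd {n : ℕ} (A B : Matrix (Fin n) (Fin n) ℝ) (α : ℝ) (c f : Fin n → ℝ)
    (p : ℝ × (Fin n → ℝ) × (Fin n → ℝ)) : ℝ :=
  -(1/2) * (c ⬝ᵥ (Gm A B p.1 p.2.1)⁻¹.mulVec c)
    - (1/4) * ∑ i, (f i + p.2.1 i + p.2.2 i)^2 / p.2.2 i
    - (1/2) * p.1^2 - α * p.1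

/-- The dual feasible set `S⁺♯`. -/
def Ssharp {n : ℕ} (A B : Matrix (Fin n) (Fin n) ℝ) (α : ℝ) :
    Set (ℝ × (Fin n → ℝ) × (Fin n → ℝ)) :=
  {p | -α ≤ p.1 ∧ (∀ i, 0 ≤ p.2.1 i) ∧ (∀ i, 0 < p.2.2 i) ∧ (Gm A B p.1 p.2.1).PosDef}

section ConvexOn

variable {𝕜 E β ι : Type*} [Semiring 𝕜] [PartialOrder 𝕜] [AddCommMonoid E] [SMul 𝕜 E]
  [AddCommMonoid β] [PartialOrder β] [IsOrderedAddMonoid β] [Module 𝕜 β] {s : Set E}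

theorem ConvexOn.of_forall_le_of_exists_eq [PosSMulMono 𝕜 β] {f : E → β} {g : ι → E → β}
    (hs : Convex 𝕜 s) (hg : ∀ i, ConvexOn 𝕜 s (g i)) (hle : ∀ i, ∀ x ∈ s, g i x ≤ f x)
    (hattain : ∀ x ∈ s, ∃ i, g i x = f x) : ConvexOn 𝕜 s f := by
  refine ⟨hs, fun x hx y hy a b ha hb hab => ?_⟩
  obtain ⟨i, hi⟩ := hattain _ (hs hx hy ha hb hab)
  calc f (a • x + b • y) = g i (a • x + b • y) := hi.symm
    _ ≤ a • g i x + b • g i y := (hg i).2 hx hy ha hb hab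
    _ ≤ a • f x + b • f y := by gcongr <;> exact hle i _ ‹_›

theorem ConvexOn.finset_sum {f : ι → E → β} (t : Finset ι) (hs : Convex 𝕜 s)
    (hf : ∀ i ∈ t, ConvexOn 𝕜 s (f i)) : ConvexOn 𝕜 s fun x => ∑ i ∈ t, f i x := by
  classical
  induction t using Finset.induction_on with
  | empty => simpa using convexOn_const 0 hs
  | insert i t hi ih =>
    simp only [Finset.sum_insert hi]
    exact (hf i (t.mem_insert_self i)).add (ih fun j hj => hf j (Finset.mem_insert_of_mem hj))

end ConvexOn

theorem convexOn_sq_div : ConvexOn ℝ {q : ℝ × ℝ | 0 < q.2} fun q => q.1 ^ 2 / q.2 := by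
  have hs : Convex ℝ {q : ℝ × ℝ | 0 < q.2} := convex_halfSpace_gt (LinearMap.snd ℝ ℝ ℝ).isLinear 0
  refine .of_forall_le_of_exists_eq (g := fun (z : ℝ) (q : ℝ × ℝ) => 2 * q.1 * z - q.2 * z ^ 2)
    hs (fun z => ⟨hs, fun x _ y _ a b _ _ _ => le_of_eq ?_⟩) (fun z q (hq : 0 < q.2) => ?_)
    (fun q (hq : 0 < q.2) => ⟨q.1 / q.2, ?_⟩)
  · simp only [Prod.fst_add, Prod.snd_add, Prod.smul_fst, Prod.smul_snd, smul_eq_mul]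
    ring
  · have hgap : q.1 ^ 2 / q.2 - (2 * q.1 * z - q.2 * z ^ 2) = (q.1 - q.2 * z) ^ 2 / q.2 := by
      field_simp
      ring
    have : 0 ≤ (q.1 - q.2 * z) ^ 2 / q.2 := by positivity
    linarith
  · field_simp
    ring

namespace Matrix

theorem convex_setOf_posDef {m : Type*} [Fintype m] : Convex ℝ {M : Matrix m m ℝ | M.PosDef} := by
  intro M hM N hN a b ha hb hab
  rcases ha.eq_or_lt with rfl | ha
  · simpa [show b = 1 by linarith] using hN
  · exact (hM.smul ha).add_posSemidef (hN.posSemidef.smul hb)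

variable {m : Type*} [Fintype m] [DecidableEq m]

theorem PosDef.two_mul_dotProduct_sub_le {M : Matrix m m ℝ} (hM : M.PosDef) (c x : m → ℝ) :
    2 * (c ⬝ᵥ x) - x ⬝ᵥ M *ᵥ x ≤ c ⬝ᵥ M⁻¹ *ᵥ c := by
  set y := M⁻¹ *ᵥ c
  have hy : M *ᵥ y = c := by rw [mulVec_mulVec, mul_nonsing_inv _ hM.det_pos.ne'.isUnit, one_mulVec]
  have hsymm : y ⬝ᵥ M *ᵥ x = c ⬝ᵥ x := by
    rw [dotProduct_mulVec, ← mulVec_transpose, (isHermitian_iff_isSymm.1 hM.isHermitian).eq, hy]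
  have hsq := hM.posSemidef.dotProduct_mulVec_nonneg (x - y)
  rw [star_trivial, mulVec_sub, hy, dotProduct_sub, sub_dotProduct, sub_dotProduct, hsymm,
    dotProduct_comm x c, dotProduct_comm y c] at hsq
  linarith

theorem two_mul_dotProduct_inv_mulVec_sub {M : Matrix m m ℝ} (hM : IsUnit M.det) (c : m → ℝ) :
    2 * (c ⬝ᵥ M⁻¹ *ᵥ c) - (M⁻¹ *ᵥ c) ⬝ᵥ M *ᵥ (M⁻¹ *ᵥ c) = c ⬝ᵥ M⁻¹ *ᵥ c := by
  rw [mulVec_mulVec, mul_nonsing_inv _ hM, one_mulVec, dotProduct_comm (M⁻¹ *ᵥ c) c]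
  ring

theorem convexOn_dotProduct_inv_mulVec (c : m → ℝ) :
    ConvexOn ℝ {M : Matrix m m ℝ | M.PosDef} fun M => c ⬝ᵥ M⁻¹ *ᵥ c := by
  refine .of_forall_le_of_exists_eq (g := fun x M => 2 * (c ⬝ᵥ x) - x ⬝ᵥ M *ᵥ x)
    convex_setOf_posDef (fun x => ⟨convex_setOf_posDef, fun M _ N _ a b _ _ hab => le_of_eq ?_⟩)
    (fun x M hM => hM.two_mul_dotProduct_sub_le c x)
    (fun M hM => ⟨M⁻¹ *ᵥ c, two_mul_dotProduct_inv_mulVec_sub hM.det_pos.ne'.isUnit c⟩)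
  simp only [add_mulVec, smul_mulVec, dotProduct_add, dotProduct_smul, smul_eq_mul]
  linear_combination (-2 * (c ⬝ᵥ x)) * hab

end Matrix

section

variable {n : ℕ}

noncomputable def gmAffineMap (A B : Matrix (Fin n) (Fin n) ℝ) :
    ℝ × (Fin n → ℝ) × (Fin n → ℝ) →ᵃ[ℝ] Matrix (Fin n) (Fin n) ℝ where
  toFun p := Gm A B p.1 p.2.1
  linear := (LinearMap.fst ℝ ℝ _).smulRight B +
    (2 : ℝ) • diagonalLinearMap (Fin n) ℝ ℝ ∘ₗ LinearMap.fst ℝ _ _ ∘ₗ LinearMap.snd ℝ _ _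
  map_vadd' p v := by
    ext i j
    by_cases h : i = j <;> simp [Gm, h, add_mul, mul_add, add_assoc, add_left_comm]

def dualTermAffineMap (f : Fin n → ℝ) (i : Fin n) :
    ℝ × (Fin n → ℝ) × (Fin n → ℝ) →ᵃ[ℝ] ℝ × ℝ where
  toFun p := (f i + p.2.1 i + p.2.2 i, p.2.2 i)
  linear :=
    (LinearMap.proj i ∘ₗ (LinearMap.fst ℝ _ _ + LinearMap.snd ℝ _ _) ∘ₗ LinearMap.snd ℝ _ _).prod
      (LinearMap.proj i ∘ₗ LinearMap.snd ℝ _ _ ∘ₗ LinearMap.snd ℝ _ _)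
  map_vadd' p v := by
    simp [add_assoc, add_left_comm]

theorem convex_Ssharp (A B : Matrix (Fin n) (Fin n) ℝ) (α : ℝ) : Convex ℝ (Ssharp A B α) :=
  fun _ hp _ hq _ _ ha hb hab =>
    ⟨convex_Ici (-α) hp.1 hq.1 ha hb hab,
      fun i => convex_Ici (0 : ℝ) (hp.2.1 i) (hq.2.1 i) ha hb hab,
      fun i => convex_Ioi (0 : ℝ) (hp.2.2.1 i) (hq.2.2.1 i) ha hb hab,
      convex_setOf_posDef.affine_preimage (gmAffineMap A B) hp.2.2.2 hq.2.2.2 ha hb hab⟩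

end

theorem Pd_concave_on_Ssharp_general {n : ℕ}
    (A B : Matrix (Fin n) (Fin n) ℝ)
    (α : ℝ) (c f : Fin n → ℝ) :
    ConcaveOn ℝ (Ssharp A B α) (Pd A B α c f) := by
  have hS := convex_Ssharp A B α
  have hinv : ConvexOn ℝ (Ssharp A B α) fun p => c ⬝ᵥ (Gm A B p.1 p.2.1)⁻¹ *ᵥ c :=
    ((convexOn_dotProduct_inv_mulVec c).comp_affineMap (gmAffineMap A B)).subset
      (fun _ hp => hp.2.2.2) hS
  have hsum : ConvexOn ℝ (Ssharp A B α) fun p => ∑ i, (f i + p.2.1 i + p.2.2 i) ^ 2 / p.2.2 i :=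
    .finset_sum _ hS fun i _ => (convexOn_sq_div.comp_affineMap (dualTermAffineMap f i)).subset
      (fun _ hp => hp.2.2.1 i) hS
  have hquad : ConvexOn ℝ (Ssharp A B α) fun p => 1 / 2 * p.1 ^ 2 + α * p.1 :=
    (((even_two.convexOn_pow.smul (by norm_num : (0 : ℝ) ≤ 1 / 2)).add
      ((LinearMap.mulLeft ℝ α).convexOn convex_univ)).comp_linearMap (LinearMap.fst ℝ ℝ _)).subset
      (Set.subset_univ _) hS
  refine (neg_concaveOn_iff.2 (((hinv.smul (by norm_num : (0 : ℝ) ≤ 1 / 2)).add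
    (hsum.smul (by norm_num : (0 : ℝ) ≤ 1 / 4))).add hquad)).congr fun p _ => ?_
  simp only [Pd, Pi.neg_apply, Pi.add_apply, smul_eq_mul]
  ring

theorem Pd_concave_on_Ssharp {n : ℕ} (hn : 0 < n)
    (A B : Matrix (Fin n) (Fin n) ℝ) (hA : A.IsSymm) (hB : B.PosSemidef)
    (α : ℝ) (hα : 0 < α) (c f : Fin n → ℝ) :
    ConcaveOn ℝ (Ssharp A B α) (Pd A B α c f) :=
  Pd_concave_on_Ssharp_general A B α c f
end

section
/- Under the hypotheses of the global optimality theorem—(ς̄,σ̄₁,σ̄₂) ∈ S⁺♯ with vanishing Fréchet derivative of P^d, x̄ = G(ς̄,σ̄₁)⁻¹ c, v̄ᵢ = (fᵢ + σ̄₁ᵢ + σ̄₂ᵢ)/(2 σ̄₂ᵢ)—the pair (x̄,v̄) minimizes P even over the larger relaxed region X̄_v = {(x,v) ∈ ℝⁿ×ℝⁿ : xᵢ² ≤ vᵢ and vᵢ(vᵢ − 1) ≤ 0 for all i}; that is, P(x̄,v̄) ≤ P(x,v) for all (x,v) ∈ X̄_v. -/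
open Matrix BigOperators

/-- The primal objective `P(x,v)`. -/
noncomputable def Pobj {n : ℕ} (A B : Matrix (Fin n) (Fin n) ℝ) (α : ℝ) (c f : Fin n → ℝ)
    (x v : Fin n → ℝ) : ℝ :=
  (1/2) * (x ⬝ᵥ A.mulVec x) - c ⬝ᵥ x
    + (1/2) * ((1/2) * (x ⬝ᵥ B.mulVec x) - α)^2 - f ⬝ᵥ v

/-- The relaxed feasible region `X̄_v`. -/
def XvRelaxed (n : ℕ) : Set ((Fin n → ℝ) × (Fin n → ℝ)) :=
  {p | ∀ i, (p.1 i)^2 ≤ p.2 i ∧ p.2 i * (p.2 i - 1) ≤ 0}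

/-!
Canonical duality. Put `G = Gm A B ς̄ σ̄₁` and let
`Ξ(x, v) = ½ xᵀ G x - cᵀx + Σᵢ (σ̄₂ᵢ vᵢ² - (fᵢ + σ̄₁ᵢ + σ̄₂ᵢ) vᵢ) - ½ ς̄² - α ς̄`
be the total complementary function. Expanding gives
`P(x, v) - Ξ(x, v) = ½ (½ xᵀBx - ς̄ - α)² + Σᵢ σ̄₁ᵢ (vᵢ - xᵢ²) + σ̄₂ᵢ (vᵢ - vᵢ²)`,
which is nonnegative on `X̄_v` because `σ̄₁, σ̄₂ ≥ 0`. Since `G ≻ 0`, `σ̄₂ > 0`, `G x̄ = c` and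
`fᵢ + σ̄₁ᵢ + σ̄₂ᵢ = 2 σ̄₂ᵢ v̄ᵢ`, `Ξ` is a convex quadratic with minimum at `(x̄, v̄)`.
The partial derivatives of `P^d` in `ς`, `σ₁ᵢ`, `σ₂ᵢ` are `½ x̄ᵀBx̄ - ς̄ - α`, `x̄ᵢ² - v̄ᵢ` and
`v̄ᵢ² - v̄ᵢ`, so at a critical point `P - Ξ` vanishes at `(x̄, v̄)`, and
`P(x̄, v̄) = Ξ(x̄, v̄) ≤ Ξ(x, v) ≤ P(x, v)`.
-/

section Calculus

variable {𝕜 ι E F : Type*} [NontriviallyNormedField 𝕜] [NormedAddCommGroup E] [NormedSpace 𝕜 E]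
  [NormedAddCommGroup F] [NormedSpace 𝕜 F]

lemma HasDerivAt.eq_zero_of_hasFDerivAt_zero {φ : E → F} {γ : 𝕜 → E} {γ' : E} {s : 𝕜} {d : F}
    (hd : HasDerivAt (fun t => φ (γ t)) d s) (hφ : HasFDerivAt φ (0 : E →L[𝕜] F) (γ s))
    (hγ : HasDerivAt γ γ' s) : d = 0 :=
  hd.unique (by simpa [Function.comp_def] using hφ.comp_hasDerivAt s hγ)

lemma hasDerivAt_sum_update [Fintype ι] [DecidableEq ι] {g : ι → 𝕜 → F} {x : ι → 𝕜} {i : ι}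
    {d : F} (h : HasDerivAt (g i) d (x i)) :
    HasDerivAt (fun s => ∑ j, g j (Function.update x i s j)) d (x i) := by
  have hsplit : (fun s => ∑ j, g j (Function.update x i s j))
      = fun s => g i s + ∑ j ∈ Finset.univ.erase i, g j (x j) := by
    funext s
    rw [← Finset.add_sum_erase _ _ (Finset.mem_univ i), Function.update_self]
    congr 1
    exact Finset.sum_congr rfl fun j hj => by rw [Function.update_of_ne (Finset.ne_of_mem_erase hj)]
  rw [hsplit]
  exact h.add_const _

end Calculus

lemma Matrix.dotProduct_diagonal_mulVec_self {ι R : Type*} [Fintype ι] [DecidableEq ι]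
    [CommSemiring R] (v x : ι → R) : x ⬝ᵥ diagonal v *ᵥ x = ∑ i, v i * x i ^ 2 := by
  simp only [dotProduct, mulVec_diagonal]
  exact Finset.sum_congr rfl fun i _ => by ring

-- Matrix inversion is differentiated in a normed-ring structure on matrices. Any submultiplicative
-- norm would do: they all induce the product topology.
attribute [local instance] Matrix.linftyOpNormedRing Matrix.linftyOpNormedAlgebra

section MatrixCalculus

variable {ι E : Type*} [Fintype ι] [NormedAddCommGroup E] [NormedSpace ℝ E]

noncomputable def Matrix.dotProductMulVecCLM (c : ι → ℝ) : Matrix ι ι ℝ →L[ℝ] ℝ :=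
  LinearMap.toContinuousLinearMap
    { toFun := fun M => c ⬝ᵥ M *ᵥ c
      map_add' := fun M N => by simp only [add_mulVec, dotProduct_add]
      map_smul' := fun r M => by simp only [smul_mulVec, dotProduct_smul, RingHom.id_apply] }

variable [DecidableEq ι]

lemma DifferentiableAt.matrix_inv {Γ : E → Matrix ι ι ℝ} {z : E} (hΓ : DifferentiableAt ℝ Γ z)
    (hz : IsUnit (Γ z)) : DifferentiableAt ℝ (fun y => (Γ y)⁻¹) z := by
  simp only [nonsing_inv_eq_ringInverse]
  exact hΓ.inverse hz

lemma HasDerivAt.matrix_inv {Γ : ℝ → Matrix ι ι ℝ} {Γ' : Matrix ι ι ℝ} {s : ℝ}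
    (hΓ : HasDerivAt Γ Γ' s) (hs : IsUnit (Γ s)) :
    HasDerivAt (fun t => (Γ t)⁻¹) (-((Γ s)⁻¹ * Γ' * (Γ s)⁻¹)) s := by
  obtain ⟨u, hu⟩ := hs
  have hinv := hasFDerivAt_ringInverse (𝕜 := ℝ) u
  rw [coe_units_inv, hu] at hinv
  simp only [nonsing_inv_eq_ringInverse] at hinv ⊢
  exact hinv.comp_hasDerivAt s hΓ

lemma HasDerivAt.dotProduct_mulVec_self {Γ : ℝ → Matrix ι ι ℝ} {Γ' : Matrix ι ι ℝ} {s : ℝ}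
    (hΓ : HasDerivAt Γ Γ' s) (c : ι → ℝ) :
    HasDerivAt (fun t => c ⬝ᵥ Γ t *ᵥ c) (c ⬝ᵥ Γ' *ᵥ c) s :=
  (dotProductMulVecCLM c).hasFDerivAt.comp_hasDerivAt s hΓ

lemma HasDerivAt.dotProduct_inv_mulVec_self {Γ : ℝ → Matrix ι ι ℝ} {Γ' : Matrix ι ι ℝ} {s : ℝ}
    (hΓ : HasDerivAt Γ Γ' s) (hs : IsUnit (Γ s)) (hsymm : (Γ s).IsSymm) (c : ι → ℝ) :
    HasDerivAt (fun t => c ⬝ᵥ (Γ t)⁻¹ *ᵥ c)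
      (-((Γ s)⁻¹ *ᵥ c ⬝ᵥ Γ' *ᵥ ((Γ s)⁻¹ *ᵥ c))) s := by
  convert (hΓ.matrix_inv hs).dotProduct_mulVec_self c using 1
  rw [neg_mulVec, dotProduct_neg, ← mulVec_mulVec, ← mulVec_mulVec, dotProduct_mulVec c,
    ← mulVec_transpose, transpose_nonsing_inv, hsymm.eq]

end MatrixCalculus

section CanonicalDual

variable {n : ℕ} {A B : Matrix (Fin n) (Fin n) ℝ} {α : ℝ} {c f : Fin n → ℝ}

lemma hasDerivAt_Gm_ς (σ₁ : Fin n → ℝ) (ς : ℝ) :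
    HasDerivAt (fun s => Gm A B s σ₁) B ς :=
  ((((hasDerivAt_id' ς).smul_const B).const_add A).add_const _).congr_deriv (one_smul ℝ B)

lemma hasDerivAt_Gm_σ₁ (ς : ℝ) (σ₁ : Fin n → ℝ) (i : Fin n) :
    HasDerivAt (fun s => Gm A B ς (Function.update σ₁ i s))
      ((2 : ℝ) • diagonal (Pi.single i 1)) (σ₁ i) := by
  have hdiag := (diagonalLinearMap (Fin n) ℝ ℝ).toContinuousLinearMap.hasFDerivAt.comp_hasDerivAt
    (σ₁ i) (hasDerivAt_update σ₁ i (σ₁ i))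
  exact (hdiag.const_smul (2 : ℝ)).const_add _

lemma differentiableAt_Pd {p : ℝ × (Fin n → ℝ) × (Fin n → ℝ)} (hG : IsUnit (Gm A B p.1 p.2.1))
    (hσ₂ : ∀ i, p.2.2 i ≠ 0) : DifferentiableAt ℝ (Pd A B α c f) p := by
  have hdiag : Differentiable ℝ (diagonal : (Fin n → ℝ) → Matrix (Fin n) (Fin n) ℝ) :=
    (diagonalLinearMap (Fin n) ℝ ℝ).toContinuousLinearMap.differentiable
  have hGm : DifferentiableAt ℝ (fun q : ℝ × (Fin n → ℝ) × (Fin n → ℝ) => Gm A B q.1 q.2.1) p := by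
    unfold Gm; fun_prop
  have hquad : DifferentiableAt ℝ (fun q => c ⬝ᵥ (Gm A B q.1 q.2.1)⁻¹ *ᵥ c) p :=
    (dotProductMulVecCLM c).differentiableAt.comp p (hGm.matrix_inv hG)
  unfold Pd
  fun_prop (disch := exact hσ₂ _)

variable {ς : ℝ} {σ₁ σ₂ : Fin n → ℝ}

lemma hasDerivAt_Pd_ς (hG : IsUnit (Gm A B ς σ₁)) (hsymm : (Gm A B ς σ₁).IsSymm) :
    HasDerivAt (fun s => Pd A B α c f (s, σ₁, σ₂))
      ((1/2) * ((Gm A B ς σ₁)⁻¹ *ᵥ c ⬝ᵥ B *ᵥ ((Gm A B ς σ₁)⁻¹ *ᵥ c)) - ς - α) ς := by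
  have hquad := (hasDerivAt_Gm_ς σ₁ ς).dotProduct_inv_mulVec_self hG hsymm c
  simp only [Pd]
  refine (((hquad.const_mul (-(1/2))).sub_const _).fun_sub ((hasDerivAt_pow 2 ς).const_mul (1/2))
    |>.fun_sub ((hasDerivAt_id' ς).const_mul α)).congr_deriv ?_
  ring

lemma hasDerivAt_Pd_σ₁ (hG : IsUnit (Gm A B ς σ₁)) (hsymm : (Gm A B ς σ₁).IsSymm) (i : Fin n) :
    HasDerivAt (fun s => Pd A B α c f (ς, Function.update σ₁ i s, σ₂))
      (((Gm A B ς σ₁)⁻¹ *ᵥ c) i ^ 2 - (f i + σ₁ i + σ₂ i) / (2 * σ₂ i)) (σ₁ i) := by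
  have hquad := (hasDerivAt_Gm_σ₁ (A := A) (B := B) ς σ₁ i).dotProduct_inv_mulVec_self
    (by rwa [Function.update_eq_self]) (by rwa [Function.update_eq_self]) c
  simp only [Function.update_eq_self, smul_mulVec, dotProduct_smul,
    dotProduct_diagonal_mulVec_self] at hquad
  have hterm : HasDerivAt (fun t => (f i + t + σ₂ i) ^ 2 / σ₂ i)
      (2 * (f i + σ₁ i + σ₂ i) / σ₂ i) (σ₁ i) :=
    ((((hasDerivAt_id' (σ₁ i)).const_add (f i)).add_const (σ₂ i)).fun_pow 2
      |>.div_const (σ₂ i)).congr_deriv (by ring)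
  have hsum := hasDerivAt_sum_update (g := fun j t => (f j + t + σ₂ j) ^ 2 / σ₂ j) hterm
  simp only [Pd]
  refine (((hquad.const_mul (-(1/2))).fun_sub (hsum.const_mul (1/4))).sub_const _ |>.sub_const _)
    |>.congr_deriv ?_
  simp only [Pi.single_apply, ite_mul, one_mul, zero_mul, Finset.sum_ite_eq', Finset.mem_univ,
    if_true, smul_eq_mul]
  ring

lemma hasDerivAt_Pd_σ₂ {i : Fin n} (hσ₂ : σ₂ i ≠ 0) :
    HasDerivAt (fun s => Pd A B α c f (ς, σ₁, Function.update σ₂ i s))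
      (((f i + σ₁ i + σ₂ i) / (2 * σ₂ i)) ^ 2 - (f i + σ₁ i + σ₂ i) / (2 * σ₂ i)) (σ₂ i) := by
  have hterm : HasDerivAt (fun t => (f i + σ₁ i + t) ^ 2 / t)
      ((2 * (f i + σ₁ i + σ₂ i) * σ₂ i - (f i + σ₁ i + σ₂ i) ^ 2) / σ₂ i ^ 2) (σ₂ i) :=
    ((((hasDerivAt_id' (σ₂ i)).const_add (f i + σ₁ i)).fun_pow 2).fun_div
      (hasDerivAt_id' (σ₂ i)) hσ₂).congr_deriv (by ring)
  have hsum := hasDerivAt_sum_update (g := fun j t => (f j + σ₁ j + t) ^ 2 / t) hterm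
  simp only [Pd]
  refine (((hasDerivAt_const _ _).fun_sub (hsum.const_mul (1/4))).sub_const _ |>.sub_const _)
    |>.congr_deriv ?_
  field_simp
  ring

lemma Pd_critical_ς (hcrit : HasFDerivAt (Pd A B α c f) (0 : _ →L[ℝ] ℝ) (ς, σ₁, σ₂))
    (hG : IsUnit (Gm A B ς σ₁)) (hsymm : (Gm A B ς σ₁).IsSymm) :
    (1/2) * ((Gm A B ς σ₁)⁻¹ *ᵥ c ⬝ᵥ B *ᵥ ((Gm A B ς σ₁)⁻¹ *ᵥ c)) - ς - α = 0 :=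
  (hasDerivAt_Pd_ς hG hsymm).eq_zero_of_hasFDerivAt_zero hcrit
    ((hasDerivAt_id' ς).prodMk (hasDerivAt_const ς (σ₁, σ₂)))

lemma Pd_critical_σ₁ (hcrit : HasFDerivAt (Pd A B α c f) (0 : _ →L[ℝ] ℝ) (ς, σ₁, σ₂))
    (hG : IsUnit (Gm A B ς σ₁)) (hsymm : (Gm A B ς σ₁).IsSymm) (i : Fin n) :
    ((Gm A B ς σ₁)⁻¹ *ᵥ c) i ^ 2 - (f i + σ₁ i + σ₂ i) / (2 * σ₂ i) = 0 :=
  (hasDerivAt_Pd_σ₁ hG hsymm i).eq_zero_of_hasFDerivAt_zero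
    (by simpa only [Function.update_eq_self] using hcrit)
    ((hasDerivAt_const (σ₁ i) ς).prodMk
      ((hasDerivAt_update σ₁ i (σ₁ i)).prodMk (hasDerivAt_const (σ₁ i) σ₂)))

lemma Pd_critical_σ₂ (hcrit : HasFDerivAt (Pd A B α c f) (0 : _ →L[ℝ] ℝ) (ς, σ₁, σ₂)) {i : Fin n}
    (hσ₂ : σ₂ i ≠ 0) :
    ((f i + σ₁ i + σ₂ i) / (2 * σ₂ i)) ^ 2 - (f i + σ₁ i + σ₂ i) / (2 * σ₂ i) = 0 :=
  (hasDerivAt_Pd_σ₂ hσ₂).eq_zero_of_hasFDerivAt_zero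
    (by simpa only [Function.update_eq_self] using hcrit)
    ((hasDerivAt_const (σ₂ i) ς).prodMk
      ((hasDerivAt_const (σ₂ i) σ₁).prodMk (hasDerivAt_update σ₂ i (σ₂ i))))

end CanonicalDual

section TotalComplementary

variable {n : ℕ} {A B : Matrix (Fin n) (Fin n) ℝ} {α : ℝ} {c f : Fin n → ℝ}
  {ς : ℝ} {σ₁ σ₂ : Fin n → ℝ}

noncomputable def totalComplementary (A B : Matrix (Fin n) (Fin n) ℝ) (α : ℝ) (c f : Fin n → ℝ)
    (ς : ℝ) (σ₁ σ₂ : Fin n → ℝ) (x v : Fin n → ℝ) : ℝ :=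
  (1/2) * (x ⬝ᵥ Gm A B ς σ₁ *ᵥ x) - c ⬝ᵥ x + ∑ i, (σ₂ i * v i ^ 2 - (f i + σ₁ i + σ₂ i) * v i)
    - (1/2) * ς ^ 2 - α * ς

lemma dotProduct_Gm_mulVec (x : Fin n → ℝ) :
    x ⬝ᵥ Gm A B ς σ₁ *ᵥ x = x ⬝ᵥ A *ᵥ x + ς * (x ⬝ᵥ B *ᵥ x) + 2 * ∑ i, σ₁ i * x i ^ 2 := by
  simp only [Gm, add_mulVec, smul_mulVec, dotProduct_add, dotProduct_smul, smul_eq_mul,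
    dotProduct_diagonal_mulVec_self]

lemma Pobj_sub_totalComplementary (x v : Fin n → ℝ) :
    Pobj A B α c f x v - totalComplementary A B α c f ς σ₁ σ₂ x v
      = (1/2) * ((1/2) * (x ⬝ᵥ B *ᵥ x) - ς - α) ^ 2
        + ∑ i, (σ₁ i * (v i - x i ^ 2) + σ₂ i * (v i - v i ^ 2)) := by
  have hsum : ∑ i, (σ₁ i * (v i - x i ^ 2) + σ₂ i * (v i - v i ^ 2)) + f ⬝ᵥ v
      + ∑ i, σ₁ i * x i ^ 2 + ∑ i, (σ₂ i * v i ^ 2 - (f i + σ₁ i + σ₂ i) * v i) = 0 := by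
    simp only [dotProduct, ← Finset.sum_add_distrib]
    exact Finset.sum_eq_zero fun i _ => by ring
  rw [Pobj, totalComplementary, dotProduct_Gm_mulVec]
  linear_combination -hsum

lemma totalComplementary_le_Pobj (hσ₁ : ∀ i, 0 ≤ σ₁ i) (hσ₂ : ∀ i, 0 ≤ σ₂ i)
    {x v : Fin n → ℝ} (hxv : (x, v) ∈ XvRelaxed n) :
    totalComplementary A B α c f ς σ₁ σ₂ x v ≤ Pobj A B α c f x v := by
  have hterm (i : Fin n) : 0 ≤ σ₁ i * (v i - x i ^ 2) + σ₂ i * (v i - v i ^ 2) := by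
    obtain ⟨hx, hv⟩ := hxv i
    exact add_nonneg (mul_nonneg (hσ₁ i) (by linarith)) (mul_nonneg (hσ₂ i) (by linarith))
  rw [← sub_nonneg, Pobj_sub_totalComplementary]
  exact add_nonneg (by positivity) (Finset.sum_nonneg fun i _ => hterm i)

lemma Pobj_eq_totalComplementary {x v : Fin n → ℝ}
    (hς : (1/2) * (x ⬝ᵥ B *ᵥ x) - ς - α = 0) (hσ₁ : ∀ i, x i ^ 2 - v i = 0)
    (hσ₂ : ∀ i, v i ^ 2 - v i = 0) :
    Pobj A B α c f x v = totalComplementary A B α c f ς σ₁ σ₂ x v := by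
  have hterms : ∑ i, (σ₁ i * (v i - x i ^ 2) + σ₂ i * (v i - v i ^ 2)) = 0 :=
    Finset.sum_eq_zero fun i _ => by linear_combination -σ₁ i * hσ₁ i - σ₂ i * hσ₂ i
  rw [← sub_eq_zero, Pobj_sub_totalComplementary, hς, hterms]
  norm_num

lemma totalComplementary_sub {xb vb : Fin n → ℝ} (hsymm : (Gm A B ς σ₁).IsSymm)
    (hGx : Gm A B ς σ₁ *ᵥ xb = c) (hv : ∀ i, f i + σ₁ i + σ₂ i = 2 * σ₂ i * vb i)
    (x v : Fin n → ℝ) :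
    totalComplementary A B α c f ς σ₁ σ₂ x v - totalComplementary A B α c f ς σ₁ σ₂ xb vb
      = (1/2) * ((x - xb) ⬝ᵥ Gm A B ς σ₁ *ᵥ (x - xb)) + ∑ i, σ₂ i * (v i - vb i) ^ 2 := by
  have hsum : ∑ i, (σ₂ i * v i ^ 2 - (f i + σ₁ i + σ₂ i) * v i)
      - ∑ i, (σ₂ i * vb i ^ 2 - (f i + σ₁ i + σ₂ i) * vb i) = ∑ i, σ₂ i * (v i - vb i) ^ 2 := by
    rw [← Finset.sum_sub_distrib]
    exact Finset.sum_congr rfl fun i _ => by rw [hv i]; ring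
  have hcross : xb ⬝ᵥ Gm A B ς σ₁ *ᵥ x = c ⬝ᵥ x := by
    rw [dotProduct_mulVec, ← mulVec_transpose, hsymm.eq, hGx]
  have hcross' : x ⬝ᵥ Gm A B ς σ₁ *ᵥ xb = c ⬝ᵥ x := by rw [hGx, dotProduct_comm]
  have hself : xb ⬝ᵥ Gm A B ς σ₁ *ᵥ xb = c ⬝ᵥ xb := by rw [hGx, dotProduct_comm]
  simp only [totalComplementary, mulVec_sub, dotProduct_sub, sub_dotProduct]
  rw [hcross, hcross', hself]
  linear_combination hsum

lemma totalComplementary_le {xb vb : Fin n → ℝ} (hG : (Gm A B ς σ₁).PosSemidef)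
    (hσ₂ : ∀ i, 0 ≤ σ₂ i) (hGx : Gm A B ς σ₁ *ᵥ xb = c)
    (hv : ∀ i, f i + σ₁ i + σ₂ i = 2 * σ₂ i * vb i) (x v : Fin n → ℝ) :
    totalComplementary A B α c f ς σ₁ σ₂ xb vb ≤ totalComplementary A B α c f ς σ₁ σ₂ x v := by
  have hquad := hG.dotProduct_mulVec_nonneg (x - xb)
  have hsum : 0 ≤ ∑ i, σ₂ i * (v i - vb i) ^ 2 :=
    Finset.sum_nonneg fun i _ => mul_nonneg (hσ₂ i) (sq_nonneg _)
  have := totalComplementary_sub (α := α) (isHermitian_iff_isSymm.mp hG.isHermitian) hGx hv x v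
  simp only [star_trivial] at hquad
  linarith

end TotalComplementary

theorem global_optimality_relaxed_general {n : ℕ}
    (A B : Matrix (Fin n) (Fin n) ℝ)
    (α : ℝ) (c f : Fin n → ℝ)
    (ςb : ℝ) (σ1b σ2b : Fin n → ℝ)
    (hmem : (ςb, σ1b, σ2b) ∈ Ssharp A B α)
    (hcrit : fderiv ℝ (Pd A B α c f) (ςb, σ1b, σ2b) = 0)
    (xb vb : Fin n → ℝ)
    (hx : xb = (Gm A B ςb σ1b)⁻¹.mulVec c)
    (hv : ∀ i, vb i = (f i + σ1b i + σ2b i) / (2 * σ2b i)) :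
    ∀ q ∈ XvRelaxed n, Pobj A B α c f xb vb ≤ Pobj A B α c f q.1 q.2 := by
  obtain ⟨-, hσ₁, hσ₂, hG⟩ := hmem
  have hsymm : (Gm A B ςb σ1b).IsSymm := isHermitian_iff_isSymm.mp hG.isHermitian
  have hσ₂ne (i : Fin n) : σ2b i ≠ 0 := (hσ₂ i).ne'
  have hstat : HasFDerivAt (Pd A B α c f) (0 : _ →L[ℝ] ℝ) (ςb, σ1b, σ2b) :=
    hcrit ▸ (differentiableAt_Pd hG.isUnit hσ₂ne).hasFDerivAt
  have hGx : Gm A B ςb σ1b *ᵥ xb = c := by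
    rw [hx, mulVec_mulVec, mul_nonsing_inv _ ((isUnit_iff_isUnit_det _).mp hG.isUnit), one_mulVec]
  have hk (i : Fin n) : f i + σ1b i + σ2b i = 2 * σ2b i * vb i := by
    rw [hv i]
    field_simp [hσ₂ne i]
  have hcompl : Pobj A B α c f xb vb = totalComplementary A B α c f ςb σ1b σ2b xb vb := by
    refine Pobj_eq_totalComplementary ?_ (fun i => ?_) (fun i => ?_)
    · simpa only [← hx] using Pd_critical_ς hstat hG.isUnit hsymm
    · simpa only [← hx, ← hv] using Pd_critical_σ₁ hstat hG.isUnit hsymm i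
    · simpa only [← hv] using Pd_critical_σ₂ hstat (hσ₂ne i)
  rintro ⟨x, v⟩ hxv
  calc Pobj A B α c f xb vb = totalComplementary A B α c f ςb σ1b σ2b xb vb := hcompl
    _ ≤ totalComplementary A B α c f ςb σ1b σ2b x v :=
      totalComplementary_le hG.posSemidef (fun i => (hσ₂ i).le) hGx hk x v
    _ ≤ Pobj A B α c f x v := totalComplementary_le_Pobj hσ₁ (fun i => (hσ₂ i).le) hxv

theorem global_optimality_relaxed {n : ℕ} (hn : 0 < n)
    (A B : Matrix (Fin n) (Fin n) ℝ) (hA : A.IsSymm) (hB : B.PosSemidef)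
    (α : ℝ) (hα : 0 < α) (c f : Fin n → ℝ)
    (ςb : ℝ) (σ1b σ2b : Fin n → ℝ)
    (hmem : (ςb, σ1b, σ2b) ∈ Ssharp A B α)
    (hcrit : fderiv ℝ (Pd A B α c f) (ςb, σ1b, σ2b) = 0)
    (xb vb : Fin n → ℝ)
    (hx : xb = (Gm A B ςb σ1b)⁻¹.mulVec c)
    (hv : ∀ i, vb i = (f i + σ1b i + σ2b i) / (2 * σ2b i)) :
    ∀ q ∈ XvRelaxed n, Pobj A B α c f xb vb ≤ Pobj A B α c f q.1 q.2 :=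
  global_optimality_relaxed_general A B α c f ςb σ1b σ2b hmem hcrit xb vb hx hv
end

section
/- Suppose ς ≥ −α, σ₁ ≥ 0 componentwise, G(ς,σ₁) is positive definite, and fᵢ + σ₁ᵢ ≠ 0 for every i. Then the supremum over all σ₂ ∈ ℝⁿ with σ₂ > 0 componentwise of P^d(ς,σ₁,σ₂) equals P^g(ς,σ₁) = −½ cᵀ G(ς,σ₁)⁻¹ c − Σᵢ max(fᵢ+σ₁ᵢ, 0) − ½ ς² − α ς. -/
open Matrix BigOperators

/-- The simplified dual function `P^g(ς,σ₁)`. -/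
noncomputable def Pg {n : ℕ} (A B : Matrix (Fin n) (Fin n) ℝ) (α : ℝ) (c f : Fin n → ℝ)
    (ς : ℝ) (σ₁ : Fin n → ℝ) : ℝ :=
  -(1/2) * (c ⬝ᵥ (Gm A B ς σ₁)⁻¹.mulVec c)
    - ∑ i, max (f i + σ₁ i) 0
    - (1/2) * ς^2 - α * ς

theorem sSup_Pd_eq_Pg {n : ℕ} (hn : 0 < n)
    (A B : Matrix (Fin n) (Fin n) ℝ) (hA : A.IsSymm) (hB : B.PosSemidef)
    (α : ℝ) (hα : 0 < α) (c f : Fin n → ℝ)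
    (ς : ℝ) (σ₁ : Fin n → ℝ)
    (hς : -α ≤ ς) (hσ₁ : ∀ i, 0 ≤ σ₁ i)
    (hG : (Gm A B ς σ₁).PosDef)
    (hf : ∀ i, f i + σ₁ i ≠ 0) :
    sSup {y : ℝ | ∃ σ₂ : Fin n → ℝ, (∀ i, 0 < σ₂ i) ∧ y = Pd A B α c f (ς, σ₁, σ₂)} =
      Pg A B α c f ς σ₁ := by
  have key : IsGreatest
      {y : ℝ | ∃ σ₂ : Fin n → ℝ, (∀ i, 0 < σ₂ i) ∧ y = Pd A B α c f (ς, σ₁, σ₂)}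
      (Pg A B α c f ς σ₁) := by
    constructor
    · refine ⟨fun i => |f i + σ₁ i|, fun i => abs_pos.mpr (hf i), ?_⟩
      unfold Pd Pg
      simp only
      have hsum : ∑ i, (f i + σ₁ i + |f i + σ₁ i|)^2 / |f i + σ₁ i|
          = ∑ i, 4 * max (f i + σ₁ i) 0 := by
        refine Finset.sum_congr rfl fun i _ => ?_
        rcases lt_or_gt_of_ne (hf i) with h | h
        · rw [abs_of_neg h, max_eq_right h.le]
          have hz : f i + σ₁ i + -(f i + σ₁ i) = 0 := by ring
          rw [hz]
          simp
        · rw [abs_of_pos h, max_eq_left h.le]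
          have hne : f i + σ₁ i ≠ 0 := hf i
          field_simp
          ring
      rw [hsum, ← Finset.mul_sum]
      ring
    · rintro y ⟨σ₂, hσ₂, rfl⟩
      unfold Pd Pg
      simp only
      have h : ∑ i, max (f i + σ₁ i) 0
          ≤ (1/4) * ∑ i, (f i + σ₁ i + σ₂ i)^2 / σ₂ i := by
        rw [Finset.mul_sum]
        refine Finset.sum_le_sum fun i _ => ?_
        set a := f i + σ₁ i with ha
        have ht : 0 < σ₂ i := hσ₂ i
        rcases le_total a 0 with hc | hc
        · rw [max_eq_right hc]
          positivity
        · rw [max_eq_left hc]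
          have h2 : 4 * a ≤ (a + σ₂ i)^2 / σ₂ i := by
            rw [le_div_iff₀ ht]
            nlinarith [sq_nonneg (a - σ₂ i)]
          linarith
      linarith
  exact key.csSup_eq
end

section
/- Analytic solution via the simplified dual: Let S⁺_{ςσ₁} = {(ς,σ₁) ∈ ℝ×ℝⁿ : ς ≥ −α, σ₁ ≥ 0 componentwise, G(ς,σ₁) is positive definite, and fᵢ+σ₁ᵢ ≠ 0 for all i}. If (ς̄,σ̄₁) ∈ S⁺_{ςσ₁} is a critical point of P^g (the Fréchet derivative of (ς,σ₁) ↦ P^g(ς,σ₁) vanishes at (ς̄,σ̄₁)), then the pair (x̄,v̄) with x̄ = G(ς̄,σ̄₁)⁻¹ c and v̄ᵢ = 1 if fᵢ+σ̄₁ᵢ > 0 and v̄ᵢ = 0 if fᵢ+σ̄₁ᵢ < 0, belongs to X_v and is a global minimizer of P over X_v. -/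
/-!
For every dual point `(ς, σ₁)` the primal objective splits as
`P(x,v) = [½ xᵀ G x − cᵀx] + ½ (½ xᵀ B x − α − ς)² − ½ ς² − α ς − Σᵢ (σ₁ᵢ xᵢ² + fᵢ vᵢ)`.
When `σ₁ ≥ 0` and `G ≻ 0`, on `X_v` the bracket is at least `−½ cᵀ G⁻¹ c`, the square is
nonnegative and each `σ₁ᵢ xᵢ² + fᵢ vᵢ` is at most `max (fᵢ + σ₁ᵢ) 0`, so `P ≥ P^g(ς, σ₁)`.
Since `fᵢ + σ₁ᵢ ≠ 0`, `P^g` is differentiable, and its directional derivatives at a critical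
point give `½ x̄ᵀ B x̄ − α = ς̄` and `x̄ᵢ² = v̄ᵢ`; this makes `(x̄, v̄)` feasible and turns all
three bounds into equalities, so `P(x̄, v̄) = P^g(ς̄, σ̄₁) ≤ P` on `X_v`.
-/

open Matrix BigOperators

/-- The primal feasible set `X_v`. -/
def Xv (n : ℕ) : Set ((Fin n → ℝ) × (Fin n → ℝ)) :=
  {p | ∀ i, (p.2 i = 0 ∨ p.2 i = 1) ∧ -p.2 i ≤ p.1 i ∧ p.1 i ≤ p.2 i}

/-- The simplified dual function `P^g`, as a function of the pair `(ς,σ₁)`. -/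
noncomputable def PgFun {n : ℕ} (A B : Matrix (Fin n) (Fin n) ℝ) (α : ℝ) (c f : Fin n → ℝ)
    (q : ℝ × (Fin n → ℝ)) : ℝ :=
  -(1/2) * (c ⬝ᵥ (Gm A B q.1 q.2)⁻¹.mulVec c)
    - ∑ i, max (f i + q.2 i) 0
    - (1/2) * q.1^2 - α * q.1

/-- The simplified dual feasible set `S⁺_{ςσ₁}`. -/
def Sg {n : ℕ} (A B : Matrix (Fin n) (Fin n) ℝ) (α : ℝ) (f : Fin n → ℝ) :
    Set (ℝ × (Fin n → ℝ)) :=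
  {q | -α ≤ q.1 ∧ (∀ i, 0 ≤ q.2 i) ∧ (Gm A B q.1 q.2).PosDef ∧ ∀ i, f i + q.2 i ≠ 0}

attribute [local instance] Matrix.linftyOpNormedRing Matrix.linftyOpNormedAlgebra

theorem hasDerivAt_max_zero {y : ℝ} (hy : y ≠ 0) :
    HasDerivAt (fun t : ℝ => max t 0) (if 0 < y then 1 else 0) y := by
  rcases hy.lt_or_gt with hneg | hpos
  · rw [if_neg hneg.not_gt]
    exact (hasDerivAt_const y (0 : ℝ)).congr_of_eventuallyEq
      (Filter.eventually_of_mem (Iio_mem_nhds hneg) fun t ht => max_eq_right (le_of_lt ht))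
  · rw [if_pos hpos]
    exact (hasDerivAt_id y).congr_of_eventuallyEq
      (Filter.eventually_of_mem (Ioi_mem_nhds hpos) fun t ht => max_eq_left (le_of_lt ht))

theorem mul_sq_add_mul_le_max {s a x v : ℝ} (hs : 0 ≤ s) (hv : v = 0 ∨ v = 1)
    (hxv : -v ≤ x ∧ x ≤ v) : s * x ^ 2 + a * v ≤ max (a + s) 0 := by
  obtain ⟨hlo, hhi⟩ := hxv
  rcases hv with rfl | rfl
  · have hx : x = 0 := le_antisymm hhi (by simpa using hlo)
    simp [hx]
  · have hx2 : x ^ 2 ≤ 1 := by nlinarith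
    have := mul_le_mul_of_nonneg_left hx2 hs
    exact le_max_of_le_left (by linarith)

theorem mul_ite_pos_eq_max (y : ℝ) : y * (if 0 < y then 1 else 0) = max y 0 := by
  split_ifs with hy
  · rw [mul_one, max_eq_left hy.le]
  · rw [mul_zero, max_eq_right (not_lt.mp hy)]

namespace Matrix

noncomputable def dotProductMulVecCLM_s8 {ι : Type*} [Fintype ι] (c : ι → ℝ) :
    Matrix ι ι ℝ →L[ℝ] ℝ :=
  LinearMap.toContinuousLinearMap
    { toFun := fun M => c ⬝ᵥ M *ᵥ c
      map_add' := fun M N => by simp [add_mulVec, dotProduct_add]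
      map_smul' := fun r M => by simp [smul_mulVec, dotProduct_smul] }

variable {ι : Type*} [Fintype ι] [DecidableEq ι]

theorem hasDerivAt_dotProduct_inv_add_smul_mulVec {G : Matrix ι ι ℝ} (hG : G.IsSymm)
    (hu : IsUnit G) (M : Matrix ι ι ℝ) (c : ι → ℝ) :
    HasDerivAt (fun t : ℝ => c ⬝ᵥ (G + t • M)⁻¹ *ᵥ c)
      (-(G⁻¹ *ᵥ c ⬝ᵥ M *ᵥ (G⁻¹ *ᵥ c))) 0 := by
  have hinv := hasFDerivAt_ringInverse (𝕜 := ℝ) hu.unit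
  rw [hu.unit_spec, ← Ring.inverse_unit hu.unit, hu.unit_spec] at hinv
  have := (dotProductMulVecCLM_s8 c).hasFDerivAt.comp_hasDerivAt 0
    (hinv.comp_hasDerivAt_of_eq 0 (((hasDerivAt_id (0 : ℝ)).smul_const M).const_add G) (by simp))
  have hfun : (fun t : ℝ => c ⬝ᵥ (G + t • M)⁻¹ *ᵥ c)
      = dotProductMulVecCLM_s8 c ∘ Ring.inverse ∘ fun t => G + id t • M := by
    funext t; simp [dotProductMulVecCLM_s8, nonsing_inv_eq_ringInverse]
  have hGt : G⁻¹ᵀ = G⁻¹ := by rw [transpose_nonsing_inv, hG.eq]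
  rw [hfun]
  refine this.congr_deriv ?_
  simp only [one_smul, ← nonsing_inv_eq_ringInverse]
  -- `dotProductMulVecCLM` carries the product topology on matrices, the operator-norm one
  -- only agrees with it up to defeq, so it is unfolded by `change`
  change c ⬝ᵥ (-(G⁻¹ * M * G⁻¹)) *ᵥ c = _
  rw [neg_mulVec, dotProduct_neg, ← mulVec_mulVec, ← mulVec_mulVec, dotProduct_mulVec c,
    ← mulVec_transpose, hGt]

theorem PosDef.neg_dotProduct_inv_mulVec_le {G : Matrix ι ι ℝ} (hG : G.PosDef) (c x : ι → ℝ) :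
    -(c ⬝ᵥ G⁻¹ *ᵥ c) ≤ x ⬝ᵥ G *ᵥ x - 2 * (c ⬝ᵥ x) := by
  set y := G⁻¹ *ᵥ c
  have hGy : G *ᵥ y = c := by
    rw [mulVec_mulVec, mul_nonsing_inv _ (isUnit_iff_isUnit_det G |>.mp hG.isUnit), one_mulVec]
  have hsymm : G.IsSymm := isHermitian_iff_isSymm.mp hG.isHermitian
  have hnonneg : 0 ≤ (x - y) ⬝ᵥ G *ᵥ (x - y) := by
    simpa using hG.posSemidef.dotProduct_mulVec_nonneg (x - y)
  have hxy : y ⬝ᵥ G *ᵥ x = c ⬝ᵥ x := by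
    rw [dotProduct_mulVec, ← mulVec_transpose, hsymm.eq, hGy]
  have hyx : x ⬝ᵥ G *ᵥ y = c ⬝ᵥ x := by rw [hGy, dotProduct_comm]
  have hyy : y ⬝ᵥ G *ᵥ y = c ⬝ᵥ y := by rw [hGy, dotProduct_comm]
  simp only [mulVec_sub, sub_dotProduct, dotProduct_sub] at hnonneg
  linarith

theorem dotProduct_diagonal_mulVec_self_s8 (d x : ι → ℝ) :
    x ⬝ᵥ diagonal d *ᵥ x = ∑ i, d i * x i ^ 2 := by
  simp only [dotProduct, mulVec_diagonal]
  exact Finset.sum_congr rfl fun i _ => by ring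

end Matrix

section

variable {n : ℕ} {A B : Matrix (Fin n) (Fin n) ℝ} {α : ℝ} {c f : Fin n → ℝ} {ς : ℝ}
  {σ : Fin n → ℝ}

theorem Gm_add_smul (t : ℝ) (d : ℝ × (Fin n → ℝ)) :
    Gm A B (ς + t * d.1) (σ + t • d.2) = Gm A B ς σ + t • (d.1 • B + (2 : ℝ) • diagonal d.2) := by
  ext i j
  simp only [Gm, Matrix.add_apply, Matrix.smul_apply, diagonal_apply, smul_eq_mul, Pi.add_apply,
    Pi.smul_apply]
  split_ifs <;> ring

theorem differentiableAt_PgFun (hG : IsUnit (Gm A B ς σ)) (hf : ∀ i, f i + σ i ≠ 0) :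
    DifferentiableAt ℝ (PgFun A B α c f) (ς, σ) := by
  have hdiag : Differentiable ℝ (fun d : Fin n → ℝ => diagonal d) :=
    (LinearMap.toContinuousLinearMap (diagonalLinearMap (Fin n) ℝ ℝ)).differentiable
  have hGm : Differentiable ℝ (fun q : ℝ × (Fin n → ℝ) => Gm A B q.1 q.2) := by
    unfold Gm; fun_prop
  have hquad : DifferentiableAt ℝ (fun q : ℝ × (Fin n → ℝ) => c ⬝ᵥ (Gm A B q.1 q.2)⁻¹ *ᵥ c)
      (ς, σ) := by
    simp_rw [nonsing_inv_eq_ringInverse]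
    exact (dotProductMulVecCLM_s8 c).differentiableAt.comp _ ((hGm _).inverse hG)
  have hmax : ∀ i, DifferentiableAt ℝ (fun q : ℝ × (Fin n → ℝ) => max (f i + q.2 i) 0) (ς, σ) :=
    fun i => (hasDerivAt_max_zero (hf i)).differentiableAt.comp (ς, σ)
      (f := fun q : ℝ × (Fin n → ℝ) => f i + q.2 i) (by fun_prop)
  unfold PgFun
  fun_prop

theorem hasLineDerivAt_PgFun (hG : (Gm A B ς σ).PosDef) (hf : ∀ i, f i + σ i ≠ 0)
    {x : Fin n → ℝ} (hx : x = (Gm A B ς σ)⁻¹ *ᵥ c) (d : ℝ × (Fin n → ℝ)) :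
    HasLineDerivAt ℝ (PgFun A B α c f)
      (d.1 * ((1/2) * (x ⬝ᵥ B *ᵥ x) - α - ς)
        + ∑ i, d.2 i * (x i ^ 2 - if 0 < f i + σ i then 1 else 0)) (ς, σ) d := by
  subst hx
  have hquad := (hasDerivAt_dotProduct_inv_add_smul_mulVec
    (isHermitian_iff_isSymm.mp hG.isHermitian) hG.isUnit
    (d.1 • B + (2 : ℝ) • diagonal d.2) c).const_mul (-(1/2) : ℝ)
  have hmax : HasDerivAt (fun t : ℝ => ∑ i, max (f i + (σ i + t * d.2 i)) 0)
      (∑ i, (if 0 < f i + σ i then 1 else 0) * d.2 i) 0 := by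
    refine HasDerivAt.fun_sum fun i _ => (hasDerivAt_max_zero (hf i)).comp_of_eq 0 ?_ (by simp)
    simpa [add_assoc] using ((hasDerivAt_id (0 : ℝ)).mul_const (d.2 i)).const_add (f i + σ i)
  have hpoly : HasDerivAt (fun t : ℝ => (1/2) * (ς + t * d.1) ^ 2 + α * (ς + t * d.1))
      ((ς + α) * d.1) 0 := by
    have h := ((hasDerivAt_id (0 : ℝ)).mul_const d.1).const_add ς
    exact (((h.pow 2).const_mul (1/2)).add (h.const_mul α)).congr_deriv
      (by simp only [one_div, Nat.cast_ofNat, id_eq, zero_mul, add_zero, Nat.add_one_sub_one,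
        pow_one, one_mul]; ring)
  have := (hquad.sub hmax).sub hpoly
  refine (this.congr_deriv ?_).congr_of_eventuallyEq (Filter.Eventually.of_forall fun t => ?_)
  · set x := (Gm A B ς σ)⁻¹ *ᵥ c
    have hD : x ⬝ᵥ (d.1 • B + (2 : ℝ) • diagonal d.2) *ᵥ x
        = d.1 * (x ⬝ᵥ B *ᵥ x) + 2 * ∑ i, d.2 i * x i ^ 2 := by
      simp only [add_mulVec, smul_mulVec, dotProduct_add, dotProduct_smul, smul_eq_mul,
        dotProduct_diagonal_mulVec_self_s8]
    have hsum : ∑ i, d.2 i * (x i ^ 2 - if 0 < f i + σ i then 1 else 0)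
        = ∑ i, d.2 i * x i ^ 2 - ∑ i, (if 0 < f i + σ i then 1 else 0) * d.2 i := by
      rw [← Finset.sum_sub_distrib]
      exact Finset.sum_congr rfl fun i _ => by ring
    rw [hD, hsum]
    ring
  · simp only [PgFun, Prod.fst_add, Prod.smul_fst, smul_eq_mul, Prod.snd_add, Prod.smul_snd,
      Gm_add_smul, Pi.add_apply, Pi.smul_apply, Pi.sub_apply]
    ring

theorem stationarity_of_fderiv_PgFun_eq_zero (hG : (Gm A B ς σ).PosDef)
    (hf : ∀ i, f i + σ i ≠ 0) (hcrit : fderiv ℝ (PgFun A B α c f) (ς, σ) = 0)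
    {x : Fin n → ℝ} (hx : x = (Gm A B ς σ)⁻¹ *ᵥ c) :
    (1/2) * (x ⬝ᵥ B *ᵥ x) - α = ς ∧ ∀ i, x i ^ 2 = if 0 < f i + σ i then 1 else 0 := by
  have hline : ∀ d : ℝ × (Fin n → ℝ), d.1 * ((1/2) * (x ⬝ᵥ B *ᵥ x) - α - ς)
      + ∑ i, d.2 i * (x i ^ 2 - if 0 < f i + σ i then 1 else 0) = 0 := fun d => by
    have h := (differentiableAt_PgFun (α := α) (c := c) hG.isUnit hf).hasFDerivAt
      |>.hasLineDerivAt d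
    rw [hcrit] at h
    exact (hasLineDerivAt_PgFun hG hf hx d).unique h
  refine ⟨?_, fun i => ?_⟩
  · have h := hline (1, 0)
    simp only [one_div, one_mul, Pi.zero_apply, zero_mul, Finset.sum_const_zero, add_zero] at h
    linarith
  · have h := hline (0, Pi.single i 1)
    simp only [one_div, zero_mul, Pi.single_apply, ite_mul, one_mul, Finset.sum_ite_eq',
      Finset.mem_univ, ↓reduceIte, zero_add] at h
    linarith

theorem mem_Xv_of_sq_eq {x v : Fin n → ℝ} (hxv : ∀ i, x i ^ 2 = v i)
    (hv : ∀ i, v i = 0 ∨ v i = 1) : (x, v) ∈ Xv n := by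
  intro i
  refine ⟨hv i, show -v i ≤ x i ∧ x i ≤ v i from ?_⟩
  rcases hv i with h | h
  · have hx : x i = 0 := pow_eq_zero_iff two_ne_zero |>.mp ((hxv i).trans h)
    simp [h, hx]
  · rw [h, ← abs_le, ← sq_le_one_iff_abs_le_one, hxv i, h]

theorem Pobj_eq_decomposition (x v : Fin n → ℝ) :
    Pobj A B α c f x v = ((1/2) * (x ⬝ᵥ Gm A B ς σ *ᵥ x) - c ⬝ᵥ x)
      + (1/2) * ((1/2) * (x ⬝ᵥ B *ᵥ x) - α - ς) ^ 2 - (1/2) * ς ^ 2 - α * ς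
      - ∑ i, (σ i * x i ^ 2 + f i * v i) := by
  have hfv : f ⬝ᵥ v = ∑ i, f i * v i := rfl
  simp only [Pobj, Gm, add_mulVec, smul_mulVec, dotProduct_add, dotProduct_smul, smul_eq_mul,
    dotProduct_diagonal_mulVec_self_s8, Finset.sum_add_distrib, hfv]
  ring

theorem PgFun_le_Pobj (hσ : ∀ i, 0 ≤ σ i) (hG : (Gm A B ς σ).PosDef) {x v : Fin n → ℝ}
    (hxv : (x, v) ∈ Xv n) : PgFun A B α c f (ς, σ) ≤ Pobj A B α c f x v := by
  have hquad := hG.neg_dotProduct_inv_mulVec_le c x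
  have hsum : ∑ i, (σ i * x i ^ 2 + f i * v i) ≤ ∑ i, max (f i + σ i) 0 :=
    Finset.sum_le_sum fun i _ => mul_sq_add_mul_le_max (hσ i) (hxv i).1 (hxv i).2
  rw [Pobj_eq_decomposition (ς := ς) (σ := σ)]
  simp only [PgFun]
  nlinarith [sq_nonneg ((1/2) * (x ⬝ᵥ B *ᵥ x) - α - ς)]

theorem Pobj_eq_PgFun (hG : (Gm A B ς σ).PosDef) {x v : Fin n → ℝ}
    (hx : x = (Gm A B ς σ)⁻¹ *ᵥ c) (hς : (1/2) * (x ⬝ᵥ B *ᵥ x) - α = ς)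
    (hxv : ∀ i, x i ^ 2 = v i) (hv : ∀ i, v i = if 0 < f i + σ i then 1 else 0) :
    Pobj A B α c f x v = PgFun A B α c f (ς, σ) := by
  have hGx : Gm A B ς σ *ᵥ x = c := by
    rw [hx, mulVec_mulVec, mul_nonsing_inv _ ((isUnit_iff_isUnit_det _).mp hG.isUnit),
      one_mulVec]
  have hquad : x ⬝ᵥ Gm A B ς σ *ᵥ x = c ⬝ᵥ (Gm A B ς σ)⁻¹ *ᵥ c := by
    rw [hGx, ← hx, dotProduct_comm]
  have hsum : ∑ i, (σ i * x i ^ 2 + f i * v i) = ∑ i, max (f i + σ i) 0 :=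
    Finset.sum_congr rfl fun i _ => by
      rw [hxv i, ← mul_ite_pos_eq_max, ← hv i]
      ring
  rw [Pobj_eq_decomposition (ς := ς) (σ := σ), hquad, hsum, hς, hx]
  simp only [PgFun]
  ring

end

theorem analytic_solution_simplified_dual_general {n : ℕ}
    (A B : Matrix (Fin n) (Fin n) ℝ)
    (α : ℝ) (c f : Fin n → ℝ)
    (ςb : ℝ) (σ1b : Fin n → ℝ)
    (hmem : (ςb, σ1b) ∈ Sg A B α f)
    (hcrit : fderiv ℝ (PgFun A B α c f) (ςb, σ1b) = 0)
    (xb vb : Fin n → ℝ)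
    (hx : xb = (Gm A B ςb σ1b)⁻¹.mulVec c)
    (hv : ∀ i, (0 < f i + σ1b i → vb i = 1) ∧ (f i + σ1b i < 0 → vb i = 0)) :
    (xb, vb) ∈ Xv n ∧
    ∀ q ∈ Xv n, Pobj A B α c f xb vb ≤ Pobj A B α c f q.1 q.2 := by
  obtain ⟨-, hσ, hG, hf⟩ := hmem
  obtain ⟨hς, hxsq⟩ := stationarity_of_fderiv_PgFun_eq_zero hG hf hcrit hx
  have hvb : ∀ i, vb i = if 0 < f i + σ1b i then 1 else 0 := fun i => by
    rcases (hf i).lt_or_gt with h | h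
    · rw [(hv i).2 h, if_neg h.not_gt]
    · rw [(hv i).1 h, if_pos h]
  have hxv : ∀ i, xb i ^ 2 = vb i := fun i => (hxsq i).trans (hvb i).symm
  refine ⟨mem_Xv_of_sq_eq hxv fun i => ?_, fun q hq => ?_⟩
  · rw [hvb i]
    split_ifs <;> simp
  · calc Pobj A B α c f xb vb = PgFun A B α c f (ςb, σ1b) := Pobj_eq_PgFun hG hx hς hxv hvb
      _ ≤ Pobj A B α c f q.1 q.2 := PgFun_le_Pobj hσ hG hq

theorem analytic_solution_simplified_dual {n : ℕ} (hn : 0 < n)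
    (A B : Matrix (Fin n) (Fin n) ℝ) (hA : A.IsSymm) (hB : B.PosSemidef)
    (α : ℝ) (hα : 0 < α) (c f : Fin n → ℝ)
    (ςb : ℝ) (σ1b : Fin n → ℝ)
    (hmem : (ςb, σ1b) ∈ Sg A B α f)
    (hcrit : fderiv ℝ (PgFun A B α c f) (ςb, σ1b) = 0)
    (xb vb : Fin n → ℝ)
    (hx : xb = (Gm A B ςb σ1b)⁻¹.mulVec c)
    (hv : ∀ i, (0 < f i + σ1b i → vb i = 1) ∧ (f i + σ1b i < 0 → vb i = 0)) :
    (xb, vb) ∈ Xv n ∧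
    ∀ q ∈ Xv n, Pobj A B α c f xb vb ≤ Pobj A B α c f q.1 q.2 :=
  analytic_solution_simplified_dual_general A B α c f ςb σ1b hmem hcrit xb vb hx hv
end

section
/- Strict concavity in the diagonal case: If A and B are diagonal matrices and cᵢ ≠ 0 for every i, then the function (ς,σ₁) ↦ −½ cᵀ G(ς,σ₁)⁻¹ c − ½ ς² − α ς is strictly concave on the convex set {(ς,σ₁) ∈ ℝ×ℝⁿ : G(ς,σ₁) is positive definite}. -/
open Matrix BigOperators

private lemma inv_combo_lt {x y a b : ℝ} (hx : 0 < x) (hy : 0 < y) (ha : 0 < a) (hb : 0 < b)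
    (hab : a + b = 1) (hxy : x ≠ y) : (a*x+b*y)⁻¹ < a*x⁻¹ + b*y⁻¹ := by
  rw [inv_lt_iff_one_lt_mul₀ (by positivity)]
  have h1 : (a*x⁻¹ + b*y⁻¹) * (a*x+b*y) = a^2 + b^2 + a*b*(x⁻¹*y + y⁻¹*x) := by
    field_simp; ring
  have h2 : x⁻¹*y + y⁻¹*x - 2 = (x-y)^2 * (x⁻¹*y⁻¹) := by field_simp; ring
  have h3 : 0 < (x-y)^2 * (x⁻¹*y⁻¹) := by
    have := sub_ne_zero.mpr hxy
    positivity
  nlinarith [mul_pos ha hb]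

private lemma inv_combo_le {x y a b : ℝ} (hx : 0 < x) (hy : 0 < y) (ha : 0 < a) (hb : 0 < b)
    (hab : a + b = 1) : (a*x+b*y)⁻¹ ≤ a*x⁻¹ + b*y⁻¹ := by
  rcases eq_or_ne x y with rfl | h
  · rw [← add_mul, hab, one_mul, ← add_mul, hab, one_mul]
  · exact (inv_combo_lt hx hy ha hb hab h).le

theorem strict_concavity_diagonal {n : ℕ} (hn : 0 < n)
    (A B : Matrix (Fin n) (Fin n) ℝ) (hA : A.IsSymm) (hB : B.PosSemidef)
    (α : ℝ) (hα : 0 < α) (c : Fin n → ℝ)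
    (hAdiag : A.IsDiag) (hBdiag : B.IsDiag)
    (hc : ∀ i, c i ≠ 0) :
    StrictConcaveOn ℝ {q : ℝ × (Fin n → ℝ) | (Gm A B q.1 q.2).PosDef}
      (fun q : ℝ × (Fin n → ℝ) =>
        -(1/2) * (c ⬝ᵥ (Gm A B q.1 q.2)⁻¹.mulVec c) - (1/2) * q.1^2 - α * q.1) := by
  set d : (ℝ × (Fin n → ℝ)) → Fin n → ℝ :=
    fun q i => A i i + q.1 * B i i + 2 * q.2 i with hd
  have hGm : ∀ q : ℝ × (Fin n → ℝ), Gm A B q.1 q.2 = diagonal (d q) := by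
    intro q; ext i j
    by_cases hij : i = j
    · subst hij; simp [Gm, hd, diagonal_apply_eq]
    · simp [Gm, diagonal_apply_ne _ hij, hAdiag hij, hBdiag hij]
  have hmem : ∀ q : ℝ × (Fin n → ℝ),
      q ∈ {q : ℝ × (Fin n → ℝ) | (Gm A B q.1 q.2).PosDef} ↔ ∀ i, 0 < d q i := by
    intro q; rw [Set.mem_setOf_eq, hGm, posDef_diagonal_iff]
  have hval : ∀ q : ℝ × (Fin n → ℝ), (∀ i, 0 < d q i) →
      (c ⬝ᵥ (Gm A B q.1 q.2)⁻¹.mulVec c) = ∑ i, c i ^ 2 * (d q i)⁻¹ := by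
    intro q hq
    rw [hGm]
    have hinv : (diagonal (d q))⁻¹ = diagonal (fun i => (d q i)⁻¹) := by
      apply inv_eq_right_inv
      rw [diagonal_mul_diagonal]
      have : (fun i => d q i * (d q i)⁻¹) = fun _ => (1:ℝ) := by
        funext i; exact mul_inv_cancel₀ (hq i).ne'
      rw [this, diagonal_one]
    rw [hinv]
    simp only [dotProduct, mulVec_diagonal]
    exact Finset.sum_congr rfl fun i _ => by ring
  have hcombo : ∀ (p q : ℝ × (Fin n → ℝ)) (a b : ℝ), a + b = 1 →
      ∀ i, d (a • p + b • q) i = a * d p i + b * d q i := by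
    intro p q a b hab i
    simp only [hd, Prod.fst_add, Prod.snd_add, Prod.smul_fst, Prod.smul_snd,
      Pi.add_apply, Pi.smul_apply, smul_eq_mul]
    linear_combination (-(A i i)) * hab
  have hcsq : ∀ i, 0 < c i ^ 2 := fun i =>
    lt_of_le_of_ne (sq_nonneg _) (Ne.symm (pow_ne_zero 2 (hc i)))
  constructor
  · -- convexity of domain
    intro p hp q hq a b ha hb hab
    rw [hmem] at hp hq ⊢
    intro i
    rw [hcombo p q a b hab i]
    rcases ha.lt_or_eq with h | h
    · nlinarith [hp i, hq i, mul_nonneg hb (hq i).le, mul_pos h (hp i)]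
    · have hb1 : b = 1 := by linarith
      simp [← h, hb1, hq i]
  · intro p hp q hq hpq a b ha hb hab
    rw [hmem] at hp hq
    have hm : ∀ i, 0 < d (a • p + b • q) i := by
      intro i; rw [hcombo p q a b hab i]
      nlinarith [hp i, hq i, mul_pos ha (hp i), mul_pos hb (hq i)]
    simp only [smul_eq_mul]
    rw [hval p hp, hval q hq, hval _ hm]
    have hfst : (a • p + b • q).1 = a * p.1 + b * q.1 := rfl
    rw [hfst]
    -- per-index inequalities
    have hle : ∀ i, c i ^ 2 * (d (a • p + b • q) i)⁻¹ ≥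
        a * (c i ^ 2 * (d p i)⁻¹) + b * (c i ^ 2 * (d q i)⁻¹) → True := fun _ _ => trivial
    have key_le : ∀ i ∈ Finset.univ, a * (c i ^ 2 * (d p i)⁻¹) + b * (c i ^ 2 * (d q i)⁻¹)
        ≥ c i ^ 2 * (d (a • p + b • q) i)⁻¹ := by
      intro i _
      rw [hcombo p q a b hab i]
      have := inv_combo_le (hp i) (hq i) ha hb hab
      nlinarith [hcsq i, mul_le_mul_of_nonneg_left this (hcsq i).le]
    rcases eq_or_ne p.1 q.1 with h1 | h1
    · -- σ differ
      have h2 : p.2 ≠ q.2 := fun h => hpq (Prod.ext h1 h)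
      obtain ⟨i₀, hi₀⟩ := Function.ne_iff.mp h2
      have hd0 : d p i₀ ≠ d q i₀ := by
        simp only [hd, h1]
        intro h; apply hi₀; linarith [h]
      have key_lt : a * (c i₀ ^ 2 * (d p i₀)⁻¹) + b * (c i₀ ^ 2 * (d q i₀)⁻¹)
          > c i₀ ^ 2 * (d (a • p + b • q) i₀)⁻¹ := by
        rw [hcombo p q a b hab i₀]
        have := inv_combo_lt (hp i₀) (hq i₀) ha hb hab hd0
        nlinarith [hcsq i₀, mul_lt_mul_of_pos_left this (hcsq i₀)]
      have hsum : ∑ i, c i ^ 2 * (d (a • p + b • q) i)⁻¹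
          < ∑ i, (a * (c i ^ 2 * (d p i)⁻¹) + b * (c i ^ 2 * (d q i)⁻¹)) := by
        apply Finset.sum_lt_sum (fun i _ => key_le i (Finset.mem_univ i))
        exact ⟨i₀, Finset.mem_univ i₀, key_lt⟩
      rw [Finset.sum_add_distrib, ← Finset.mul_sum, ← Finset.mul_sum] at hsum
      have he : a * p.1 + b * q.1 = p.1 := by rw [h1, ← add_mul, hab, one_mul]
      have hq2eq : a * p.1^2 + b * q.1^2 = p.1^2 := by
        linear_combination p.1^2 * hab - b*(p.1+q.1)*h1
      rw [he]
      nlinarith [hsum, hq2eq]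
    · -- ς differ: quadratic strict
      have hsum : ∑ i, c i ^ 2 * (d (a • p + b • q) i)⁻¹
          ≤ ∑ i, (a * (c i ^ 2 * (d p i)⁻¹) + b * (c i ^ 2 * (d q i)⁻¹)) :=
        Finset.sum_le_sum fun i hi => key_le i hi
      rw [Finset.sum_add_distrib, ← Finset.mul_sum, ← Finset.mul_sum] at hsum
      have hq2 : (a * p.1 + b * q.1)^2 < a * p.1^2 + b * q.1^2 := by
        have hne : 0 < (p.1 - q.1)^2 :=
          lt_of_le_of_ne (sq_nonneg _) (Ne.symm (pow_ne_zero 2 (sub_ne_zero.mpr h1)))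
        nlinarith [mul_pos ha hb, hne]
      nlinarith [hsum, hq2]
end

section
/- Characterization of critical points in the decoupled case: Suppose A = diagonal(a) and B = diagonal(b) with a, b ∈ ℝⁿ and bᵢ ≥ 0 for all i, and cᵢ ≠ 0 for all i. Let (ς,σ₁,σ₂) ∈ ℝ×ℝⁿ×ℝⁿ be such that σ₂ᵢ ≠ 0 for all i, G(ς,σ₁) is invertible, and the Fréchet derivative of P^d vanishes at (ς,σ₁,σ₂). Then ς = ½ Σᵢ bᵢ − α, and for every i one has (aᵢ + ς bᵢ + 2σ₁ᵢ)² = cᵢ² and σ₂ᵢ = fᵢ + σ₁ᵢ. -/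
/-!
With `A = diag a` and `B = diag b`, the matrix `G(ς, σ₁)` is diagonal with entries
`gᵢ = aᵢ + ς bᵢ + 2σ₁ᵢ`, so near the point `P^d` is the explicit function
`-½ Σ cᵢ²/gᵢ - ¼ Σ sᵢ²/σ₂ᵢ - ½ ς² - α ς` with `sᵢ = fᵢ + σ₁ᵢ + σ₂ᵢ`.
Writing `uᵢ = sᵢ / (2σ₂ᵢ)`, its partial derivatives vanish iff `uᵢ = cᵢ²/gᵢ²` (in `σ₁ᵢ`),
`uᵢ² = uᵢ` (in `σ₂ᵢ`) and `½ Σ cᵢ² bᵢ / gᵢ² = ς + α` (in `ς`). As `cᵢ ≠ 0`, `uᵢ ≠ 0`, so `uᵢ = 1`: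
this is `gᵢ² = cᵢ²` and `σ₂ᵢ = fᵢ + σ₁ᵢ`, and then the `ς`-equation reads `½ Σ bᵢ = ς + α`.
-/

open Matrix BigOperators

open Filter Topology

section

variable {𝕜 : Type*} [NontriviallyNormedField 𝕜]

theorem hasDerivAt_affine (x d : 𝕜) : HasDerivAt (fun t : 𝕜 => x + t * d) d 0 := by
  simpa using ((hasDerivAt_id (0 : 𝕜)).mul_const d).const_add x

theorem hasDerivAt_div_affine (x : 𝕜) {g : 𝕜} (hg : g ≠ 0) (d : 𝕜) :
    HasDerivAt (fun t : 𝕜 => x / (g + t * d)) (-(x * d) / g ^ 2) 0 := by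
  refine ((hasDerivAt_const (0 : 𝕜) x).fun_div (hasDerivAt_affine g d)
    (by simpa using hg)).congr_deriv ?_
  simp

theorem hasDerivAt_sq_div_affine (s e : 𝕜) {σ : 𝕜} (hσ : σ ≠ 0) (r : 𝕜) :
    HasDerivAt (fun t : 𝕜 => (s + t * e) ^ 2 / (σ + t * r))
      ((2 * s * e * σ - s ^ 2 * r) / σ ^ 2) 0 := by
  refine (((hasDerivAt_affine s e).fun_pow 2).fun_div (hasDerivAt_affine σ r)
    (by simpa using hσ)).congr_deriv ?_
  simp

end

theorem dotProduct_inv_diagonal_mulVec {ι K : Type*} [Fintype ι] [DecidableEq ι] [Field K]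
    {d : ι → K} (hd : ∀ i, d i ≠ 0) (x : ι → K) :
    x ⬝ᵥ (diagonal d)⁻¹ *ᵥ x = ∑ i, x i ^ 2 / d i := by
  have hinv : (diagonal d)⁻¹ = diagonal d⁻¹ := by
    refine inv_eq_right_inv ?_
    rw [diagonal_mul_diagonal, ← diagonal_one]
    exact congrArg diagonal (funext fun i => mul_inv_cancel₀ (hd i))
  simp only [hinv, mulVec_diagonal, dotProduct, Pi.inv_apply]
  refine Finset.sum_congr rfl fun i _ => ?_
  ring

section

variable {n : ℕ} (a b c f : Fin n → ℝ) (α : ℝ)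

def gDiag (ς : ℝ) (σ₁ : Fin n → ℝ) : Fin n → ℝ := fun i => a i + ς * b i + 2 * σ₁ i

theorem Gm_diagonal (ς : ℝ) (σ₁ : Fin n → ℝ) :
    Gm (diagonal a) (diagonal b) ς σ₁ = diagonal (gDiag a b ς σ₁) := by
  simp only [Gm, ← diagonal_smul, diagonal_add]
  rfl

noncomputable def PdDiag (p : ℝ × (Fin n → ℝ) × (Fin n → ℝ)) : ℝ :=
  -(1/2) * ∑ i, c i ^ 2 / gDiag a b p.1 p.2.1 i
    - (1/4) * ∑ i, (f i + p.2.1 i + p.2.2 i) ^ 2 / p.2.2 i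
    - (1/2) * p.1 ^ 2 - α * p.1

variable {a b} {ς : ℝ} {σ₁ σ₂ : Fin n → ℝ}

theorem Pd_diagonal_eventuallyEq (hg : ∀ i, gDiag a b ς σ₁ i ≠ 0) :
    Pd (diagonal a) (diagonal b) α c f =ᶠ[𝓝 (ς, σ₁, σ₂)] PdDiag a b c f α := by
  have hcont (i : Fin n) : Continuous fun p : ℝ × (Fin n → ℝ) × (Fin n → ℝ) =>
      gDiag a b p.1 p.2.1 i := by
    unfold gDiag; fun_prop
  filter_upwards [eventually_all.2 fun i => (hcont i).continuousAt.eventually_ne (hg i)]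
    with p hp
  simp only [Pd, PdDiag, Gm_diagonal, dotProduct_inv_diagonal_mulVec hp]

theorem differentiableAt_PdDiag (hg : ∀ i, gDiag a b ς σ₁ i ≠ 0) (hσ₂ : ∀ i, σ₂ i ≠ 0) :
    DifferentiableAt ℝ (PdDiag a b c f α) (ς, σ₁, σ₂) := by
  unfold PdDiag gDiag
  fun_prop (disch := first | exact hg _ | exact hσ₂ _)

theorem hasLineDerivAt_PdDiag (hg : ∀ i, gDiag a b ς σ₁ i ≠ 0) (hσ₂ : ∀ i, σ₂ i ≠ 0)
    (v₁ : ℝ) (w r : Fin n → ℝ) :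
    HasLineDerivAt ℝ (PdDiag a b c f α)
      (v₁ * ((1/2) * ∑ i, c i ^ 2 * b i / gDiag a b ς σ₁ i ^ 2 - ς - α)
        + ∑ i, (w i * (c i ^ 2 / gDiag a b ς σ₁ i ^ 2 - (f i + σ₁ i + σ₂ i) / (2 * σ₂ i))
          + r i * (((f i + σ₁ i + σ₂ i) / (2 * σ₂ i)) ^ 2 - (f i + σ₁ i + σ₂ i) / (2 * σ₂ i))))
      (ς, σ₁, σ₂) (v₁, w, r) := by
  set g := gDiag a b ς σ₁
  set s : Fin n → ℝ := fun i => f i + σ₁ i + σ₂ i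
  have hline : (fun t : ℝ => PdDiag a b c f α ((ς, σ₁, σ₂) + t • (v₁, w, r))) = fun t =>
      -(1/2) * ∑ i, c i ^ 2 / (g i + t * (v₁ * b i + 2 * w i))
        - (1/4) * ∑ i, (s i + t * (w i + r i)) ^ 2 / (σ₂ i + t * r i)
        - (1/2) * (ς + t * v₁) ^ 2 - α * (ς + t * v₁) := by
    funext t
    simp only [PdDiag, g, s, gDiag, Prod.smul_mk, Prod.mk_add_mk, Pi.add_apply, Pi.smul_apply,
      smul_eq_mul]
    congr 4 <;> refine Finset.sum_congr rfl fun i _ => by ring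
  rw [HasLineDerivAt, hline]
  refine ((((HasDerivAt.fun_sum fun i _ =>
      hasDerivAt_div_affine (c i ^ 2) (hg i) (v₁ * b i + 2 * w i)).const_mul (-(1/2))).sub
    ((HasDerivAt.fun_sum fun i _ =>
      hasDerivAt_sq_div_affine (s i) (w i + r i) (hσ₂ i) (r i)).const_mul (1/4))).sub
    (((hasDerivAt_affine ς v₁).fun_pow 2).const_mul (1/2))).sub
    ((hasDerivAt_affine ς v₁).const_mul α) |>.congr_deriv ?_
  have hterm (i : Fin n) :
      -(1/2) * (-(c i ^ 2 * (v₁ * b i + 2 * w i)) / g i ^ 2)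
        - 1/4 * ((2 * s i * (w i + r i) * σ₂ i - s i ^ 2 * r i) / σ₂ i ^ 2)
      = v₁ * (1/2 * (c i ^ 2 * b i / g i ^ 2))
        + (w i * (c i ^ 2 / g i ^ 2 - s i / (2 * σ₂ i))
          + r i * ((s i / (2 * σ₂ i)) ^ 2 - s i / (2 * σ₂ i))) := by
    field_simp [hg i, hσ₂ i]
    ring
  rw [Finset.mul_sum, Finset.mul_sum, ← Finset.sum_sub_distrib,
    Finset.sum_congr rfl fun i _ => hterm i, Finset.sum_add_distrib, ← Finset.mul_sum,
    ← Finset.mul_sum]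
  push_cast
  ring

theorem PdDiag_critical (hc : ∀ i, c i ≠ 0) (hg : ∀ i, gDiag a b ς σ₁ i ≠ 0)
    (hσ₂ : ∀ i, σ₂ i ≠ 0) (hcrit : HasFDerivAt (PdDiag a b c f α) (0 : _ →L[ℝ] ℝ) (ς, σ₁, σ₂)) :
    ς = (1/2) * ∑ i, b i - α ∧ (∀ i, gDiag a b ς σ₁ i ^ 2 = c i ^ 2) ∧
      (∀ i, σ₂ i = f i + σ₁ i) := by
  have hzero (v₁ : ℝ) (w r : Fin n → ℝ) := ((hcrit.hasLineDerivAt (v₁, w, r)).unique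
    (hasLineDerivAt_PdDiag c f α hg hσ₂ v₁ w r)).symm
  simp only [_root_.zero_apply] at hzero
  set g := gDiag a b ς σ₁
  set u : Fin n → ℝ := fun i => (f i + σ₁ i + σ₂ i) / (2 * σ₂ i)
  have hσ₁_partial (j : Fin n) : c j ^ 2 / g j ^ 2 = u j :=
    sub_eq_zero.1 (by simpa [Pi.single_apply] using hzero 0 (Pi.single j 1) 0)
  have hσ₂_partial (j : Fin n) : u j ^ 2 = u j :=
    sub_eq_zero.1 (by simpa [Pi.single_apply] using hzero 0 0 (Pi.single j 1))
  have hu (j : Fin n) : u j = 1 := by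
    have hne : u j ≠ 0 := by
      rw [← hσ₁_partial j]; exact div_ne_zero (pow_ne_zero 2 (hc j)) (pow_ne_zero 2 (hg j))
    exact mul_left_cancel₀ hne (by rw [mul_one, ← sq, hσ₂_partial j])
  have hratio (j : Fin n) : c j ^ 2 / g j ^ 2 = 1 := (hσ₁_partial j).trans (hu j)
  refine ⟨?_, fun j => ((div_eq_one_iff_eq (pow_ne_zero 2 (hg j))).1 (hratio j)).symm,
    fun j => ?_⟩
  · have hς := hzero 1 0 0
    simp only [Pi.zero_apply, zero_mul, add_zero, Finset.sum_const_zero, one_mul,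
      mul_div_right_comm _ (b _), hratio] at hς
    linarith
  · have h := (div_eq_one_iff_eq (mul_ne_zero two_ne_zero (hσ₂ j))).1 (hu j)
    linarith

end

theorem decoupled_critical_points_general {n : ℕ}
    (A B : Matrix (Fin n) (Fin n) ℝ)
    (α : ℝ) (c f : Fin n → ℝ)
    (a b : Fin n → ℝ)
    (hA : A = Matrix.diagonal a) (hB : B = Matrix.diagonal b)
    (hc : ∀ i, c i ≠ 0)
    (ς : ℝ) (σ₁ σ₂ : Fin n → ℝ)
    (hσ₂ : ∀ i, σ₂ i ≠ 0)
    (hG : IsUnit (Gm A B ς σ₁))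
    (hcrit : fderiv ℝ (Pd A B α c f) (ς, σ₁, σ₂) = 0) :
    ς = (1/2) * ∑ i, b i - α ∧
    (∀ i, (a i + ς * b i + 2 * σ₁ i)^2 = (c i)^2) ∧
    (∀ i, σ₂ i = f i + σ₁ i) := by
  subst hA hB
  have hg : ∀ i, gDiag a b ς σ₁ i ≠ 0 := by
    simpa [Gm_diagonal, isUnit_diagonal, Pi.isUnit_iff] using hG
  have hPd := Pd_diagonal_eventuallyEq c f α (σ₂ := σ₂) hg
  have hF := (differentiableAt_PdDiag c f α hg hσ₂).hasFDerivAt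
  rw [← hPd.fderiv_eq, hcrit] at hF
  exact PdDiag_critical c f α hc hg hσ₂ hF

theorem decoupled_critical_points {n : ℕ} (hn : 0 < n)
    (A B : Matrix (Fin n) (Fin n) ℝ)
    (α : ℝ) (hα : 0 < α) (c f : Fin n → ℝ)
    (a b : Fin n → ℝ)
    (hA : A = Matrix.diagonal a) (hB : B = Matrix.diagonal b)
    (hb : ∀ i, 0 ≤ b i) (hc : ∀ i, c i ≠ 0)
    (ς : ℝ) (σ₁ σ₂ : Fin n → ℝ)
    (hσ₂ : ∀ i, σ₂ i ≠ 0)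
    (hG : IsUnit (Gm A B ς σ₁))
    (hcrit : fderiv ℝ (Pd A B α c f) (ς, σ₁, σ₂) = 0) :
    ς = (1/2) * ∑ i, b i - α ∧
    (∀ i, (a i + ς * b i + 2 * σ₁ i)^2 = (c i)^2) ∧
    (∀ i, σ₂ i = f i + σ₁ i) :=
  decoupled_critical_points_general A B α c f a b hA hB hc ς σ₁ σ₂ hσ₂ hG hcrit
end
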